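/- arXiv:1612.04838 — 4 statements merged into one kernel-verified Lean document; each statement's English description precedes it below -/
import Mathlib

section
/- Let 0 = y_0 ≤ y_1 ≤ ... ≤ y_n with y_0 = 0, let D = ∑_{i=1}^n (1/i)(y_i - y_{i-1}) > 0, and let α ∈ (0,1). If G : [0,1] → ℝ is nondecreasing with G(0) = 0 and critical values 0 = c_0 ≤ c_1 ≤ ... ≤ c_n satisfy G(c_i) ≤ (α/D)·y_i for all i, then ∑_{i=1}^{n} (1/i)(G(c_i) - G(c_{i-1})) ≤ α. -/
/-! Summation by parts: for weights `a₁ ≥ ⋯ ≥ aₙ ≥ 0` and sequences with `g 0 = h 0`,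
`∑ aᵢ (gᵢ - gᵢ₋₁) = ∑_{0<i<n} (aᵢ - aᵢ₊₁) gᵢ + aₙ gₙ - a₁ g₀` is monotone in `g`
once `g₀` is fixed. Applied with weights `1/i` to `gᵢ = G(cᵢ) ≤ (α/D) yᵢ = hᵢ`, the
right-hand side is `(α/D) · D = α`. -/

open Finset

section
variable {R : Type*} [CommRing R] [LinearOrder R] [IsStrictOrderedRing R]

theorem mul_le_sum_Icc_mul_sub_of_antitoneOn {a f : ℕ → R} (hf0 : f 0 = 0) :
    ∀ {n : ℕ}, (∀ i ≤ n, 0 ≤ f i) → AntitoneOn a (Set.Icc 1 n) →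
      a n * f n ≤ ∑ i ∈ Icc 1 n, a i * (f i - f (i - 1))
  | 0, _, _ => by simp [hf0]
  | m + 1, hf, ha => by
    have ih := mul_le_sum_Icc_mul_sub_of_antitoneOn hf0 (fun i hi => hf i (by omega))
      (ha.mono (Set.Icc_subset_Icc_right (Nat.le_succ m)))
    have hstep : a (m + 1) * f m ≤ a m * f m := by
      rcases Nat.eq_zero_or_pos m with rfl | hm
      · simp [hf0]
      · exact mul_le_mul_of_nonneg_right
          (ha ⟨hm, by omega⟩ ⟨by omega, le_rfl⟩ (Nat.le_succ m)) (hf m (Nat.le_succ m))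
    rw [sum_Icc_succ_top (by omega), Nat.add_sub_cancel]
    linear_combination ih + hstep

theorem sum_Icc_mul_sub_le_of_antitoneOn {a g h : ℕ → R} {n : ℕ} (h0 : g 0 = h 0)
    (hgh : ∀ i ≤ n, g i ≤ h i) (ha : AntitoneOn a (Set.Icc 1 n)) (han : 0 ≤ a n) :
    ∑ i ∈ Icc 1 n, a i * (g i - g (i - 1)) ≤ ∑ i ∈ Icc 1 n, a i * (h i - h (i - 1)) := by
  have key := mul_le_sum_Icc_mul_sub_of_antitoneOn (f := h - g) (by simp [h0])
    (fun i hi => sub_nonneg.2 (hgh i hi)) ha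
  have hdiff : ∑ i ∈ Icc 1 n, a i * ((h - g) i - (h - g) (i - 1)) =
      ∑ i ∈ Icc 1 n, a i * (h i - h (i - 1)) - ∑ i ∈ Icc 1 n, a i * (g i - g (i - 1)) := by
    rw [← sum_sub_distrib]
    exact sum_congr rfl fun i _ => by simp only [Pi.sub_apply]; ring
  have := mul_nonneg han (sub_nonneg.2 (hgh n le_rfl))
  simp only [Pi.sub_apply] at key hdiff
  linarith
end

theorem antitoneOn_one_div_natCast :
    AntitoneOn (fun i : ℕ => 1 / (i : ℝ)) (Set.Ici 1) := fun i hi j _ hij =>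
  one_div_le_one_div_of_le (by exact_mod_cast hi) (by exact_mod_cast hij)

theorem fdr_bound_le_alpha_general (n : ℕ)
    (y : ℕ → ℝ) (hy0 : y 0 = 0)
    (hD : 0 < ∑ i ∈ Finset.Icc 1 n, (1 / (i : ℝ)) * (y i - y (i - 1)))
    (α : ℝ)
    (G : ℝ → ℝ) (hG0 : G 0 = 0)
    (c : ℕ → ℝ) (hc0 : c 0 = 0)
    (hbound : ∀ i ≤ n, G (c i) ≤
      (α / (∑ i ∈ Finset.Icc 1 n, (1 / (i : ℝ)) * (y i - y (i - 1)))) * y i) :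
    ∑ i ∈ Finset.Icc 1 n, (1 / (i : ℝ)) * (G (c i) - G (c (i - 1))) ≤ α := by
  set D := ∑ i ∈ Finset.Icc 1 n, (1 / (i : ℝ)) * (y i - y (i - 1))
  calc ∑ i ∈ Icc 1 n, (1 / (i : ℝ)) * (G (c i) - G (c (i - 1)))
      ≤ ∑ i ∈ Icc 1 n, (1 / (i : ℝ)) * (α / D * y i - α / D * y (i - 1)) :=
        sum_Icc_mul_sub_le_of_antitoneOn (by simp [hc0, hG0, hy0]) hbound
          (antitoneOn_one_div_natCast.mono Set.Icc_subset_Ici_self) (by positivity)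
    _ = α / D * D := by simp only [← mul_sub, mul_left_comm _ (α / D), ← mul_sum]; rfl
    _ = α := div_mul_cancel₀ α hD.ne'

/-- Deterministic core of Corollary 2(a): if `D = ∑_{i=1}^n (1/i)(y i - y (i-1)) > 0`,
`α ∈ (0,1)`, `G` is nondecreasing on `[0,1]` with `G 0 = 0`, and the critical values
satisfy `G (c i) ≤ (α/D) * y i`, then `∑_{i=1}^n (1/i)(G (c i) - G (c (i-1))) ≤ α`. -/
theorem fdr_bound_le_alpha (n : ℕ) (hn : 1 ≤ n)
    (y : ℕ → ℝ) (hy0 : y 0 = 0) (hymono : ∀ i < n, y i ≤ y (i + 1))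
    (hD : 0 < ∑ i ∈ Finset.Icc 1 n, (1 / (i : ℝ)) * (y i - y (i - 1)))
    (α : ℝ) (hα : α ∈ Set.Ioo (0 : ℝ) 1)
    (G : ℝ → ℝ) (hG : MonotoneOn G (Set.Icc 0 1)) (hG0 : G 0 = 0)
    (c : ℕ → ℝ) (hc0 : c 0 = 0) (hcmono : ∀ i < n, c i ≤ c (i + 1))
    (hcmem : ∀ i ≤ n, c i ∈ Set.Icc (0 : ℝ) 1)
    (hbound : ∀ i ≤ n, G (c i) ≤
      (α / (∑ i ∈ Finset.Icc 1 n, (1 / (i : ℝ)) * (y i - y (i - 1)))) * y i) :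
    ∑ i ∈ Finset.Icc 1 n, (1 / (i : ℝ)) * (G (c i) - G (c (i - 1))) ≤ α :=
  fdr_bound_le_alpha_general n y hy0 hD α G hG0 c hc0 hbound
end

section
/- If G(x) ≤ n·x for all x ∈ [0,1] and critical values are defined by the Benjamini-Yekutieli rule c_i^{BY} = iα/(n·D_BY) with D_BY = ∑_{k=1}^n 1/k, then any nondecreasing sequence c ∈ [0,1]^n maximal with respect to the constraint G(c_i) ≤ iα/D_BY satisfies c_i ≥ c_i^{BY} for all i. -/
theorem one_le_sum_Icc_one_div {n : ℕ} (hn : 1 ≤ n) :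
    (1 : ℝ) ≤ ∑ k ∈ Finset.Icc 1 n, 1 / (k : ℝ) := by
  have h1 : 1 ∈ Finset.Icc 1 n := Finset.mem_Icc.mpr ⟨le_rfl, hn⟩
  simpa using Finset.single_le_sum (f := fun k : ℕ => 1 / (k : ℝ))
    (fun k _ => by positivity) h1

theorem mul_div_mul_mem_Icc {i n : ℕ} {α D : ℝ} (hα : α ∈ Set.Icc (0 : ℝ) 1) (hin : i ≤ n)
    (hD : 1 ≤ D) : (i : ℝ) * α / ((n : ℝ) * D) ∈ Set.Icc (0 : ℝ) 1 := by
  obtain ⟨hα0, hα1⟩ := hα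
  refine ⟨by positivity, div_le_one_of_le₀ ?_ (by positivity)⟩
  calc (i : ℝ) * α ≤ (n : ℝ) * 1 := mul_le_mul (by exact_mod_cast hin) hα1 hα0 (by positivity)
    _ ≤ (n : ℝ) * D := by gcongr

theorem le_sSup_sublevel_Icc {G : ℝ → ℝ} {t x : ℝ} (hx : x ∈ Set.Icc (0 : ℝ) 1) (hGx : G x ≤ t) :
    x ≤ sSup {y ∈ Set.Icc (0 : ℝ) 1 | G y ≤ t} :=
  le_csSup ⟨1, fun _ hy => hy.1.2⟩ ⟨hx, hGx⟩

theorem discrete_BY_dominates_BY_general (n : ℕ)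
    (G : ℝ → ℝ)
    (hGdom : ∀ x ∈ Set.Icc (0 : ℝ) 1, G x ≤ (n : ℝ) * x)
    (α : ℝ) (hα : α ∈ Set.Ioo (0 : ℝ) 1)
    (c : ℕ → ℝ)
    (hc : ∀ i ∈ Finset.Icc 1 n, c i =
      sSup {x ∈ Set.Icc (0 : ℝ) 1 |
        G x ≤ (i : ℝ) * α / (∑ k ∈ Finset.Icc 1 n, 1 / (k : ℝ))}) :
    ∀ i ∈ Finset.Icc 1 n,
      (i : ℝ) * α / ((n : ℝ) * (∑ k ∈ Finset.Icc 1 n, 1 / (k : ℝ))) ≤ c i := by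
  intro i hi
  obtain ⟨hi1, hin⟩ := Finset.mem_Icc.mp hi
  set D := ∑ k ∈ Finset.Icc 1 n, 1 / (k : ℝ)
  have hD : 1 ≤ D := one_le_sum_Icc_one_div (hi1.trans hin)
  have hn : (n : ℝ) ≠ 0 := Nat.cast_ne_zero.mpr (by omega)
  set x₀ := (i : ℝ) * α / ((n : ℝ) * D)
  have hx₀ : x₀ ∈ Set.Icc (0 : ℝ) 1 := mul_div_mul_mem_Icc (Set.Ioo_subset_Icc_self hα) hin hD
  have hGx₀ : G x₀ ≤ (i : ℝ) * α / D :=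
    calc G x₀ ≤ (n : ℝ) * x₀ := hGdom x₀ hx₀
      _ = (i : ℝ) * α / D := by simp only [x₀]; field_simp
  rw [hc i hi]
  exact le_sSup_sublevel_Icc hx₀ hGx₀

/-- If `G x ≤ n x` on `[0,1]` and the critical values `c i` are maximal with respect
to the constraint `G (c i) ≤ i α / D_BY` (i.e. `c i = sSup {x ∈ [0,1] | G x ≤ i α / D_BY}`),
then `c i ≥ i α / (n D_BY)`, the classical Benjamini-Yekutieli critical value. -/
theorem discrete_BY_dominates_BY (n : ℕ) (hn : 1 ≤ n)
    (G : ℝ → ℝ) (hGmono : MonotoneOn G (Set.Icc 0 1))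
    (hGdom : ∀ x ∈ Set.Icc (0 : ℝ) 1, G x ≤ (n : ℝ) * x)
    (α : ℝ) (hα : α ∈ Set.Ioo (0 : ℝ) 1)
    (c : ℕ → ℝ)
    (hc : ∀ i ∈ Finset.Icc 1 n, c i =
      sSup {x ∈ Set.Icc (0 : ℝ) 1 |
        G x ≤ (i : ℝ) * α / (∑ k ∈ Finset.Icc 1 n, 1 / (k : ℝ))}) :
    ∀ i ∈ Finset.Icc 1 n,
      (i : ℝ) * α / ((n : ℝ) * (∑ k ∈ Finset.Icc 1 n, 1 / (k : ℝ))) ≤ c i :=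
  discrete_BY_dominates_BY_general n G hGdom α hα c hc
end

section
/- Consider n = 4 independent p-values with null distributions P_1 = 0.05·δ_{0.05} + 0.95·δ_1, P_2 = 0.025·δ_{0.10} + 0.975·δ_1, P_3 = 0.025·δ_{0.15} + 0.975·δ_1, P_4 = δ_1. Under the complete null, the probability that at least one of the events {G(PV_(j)) ≤ j·α for some j} occurs with α = 0.05 and the Heyse adjusted p-values (i.e., the probability that the DBH procedure makes at least one rejection) equals 0.05059375 > 0.05. -/
/-- CDF of `P₁ = 0.05·δ_{0.05} + 0.95·δ_1`. -/
noncomputable def F₁ (x : ℝ) : ℝ := if x < 0.05 then 0 else if x < 1 then 0.05 else 1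
/-- CDF of `P₂ = 0.025·δ_{0.10} + 0.975·δ_1`. -/
noncomputable def F₂ (x : ℝ) : ℝ := if x < 0.10 then 0 else if x < 1 then 0.025 else 1
/-- CDF of `P₃ = 0.025·δ_{0.15} + 0.975·δ_1`. -/
noncomputable def F₃ (x : ℝ) : ℝ := if x < 0.15 then 0 else if x < 1 then 0.025 else 1
/-- CDF of `P₄ = δ_1`. -/
noncomputable def F₄ (x : ℝ) : ℝ := if x < 1 then 0 else 1

/-- `G = F₁ + F₂ + F₃ + F₄`, the sum of the four null CDFs. -/
noncomputable def Gsum (x : ℝ) : ℝ := F₁ x + F₂ x + F₃ x + F₄ x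

/-- The realized p-values `(PV₁, PV₂, PV₃, PV₄)` for an outcome
`ω : Bool × Bool × Bool` (`true` = the small atom is realized; `PV₄ ≡ 1`). -/
noncomputable def pvList (ω : Bool × Bool × Bool) : List ℝ :=
  [if ω.1 then 0.05 else 1, if ω.2.1 then 0.10 else 1, if ω.2.2 then 0.15 else 1, 1]

/-- The `j`-th sorted p-value `PV_(j)` (1-indexed). -/
noncomputable def sortedPV (ω : Bool × Bool × Bool) (j : ℕ) : ℝ :=
  ((pvList ω : Multiset ℝ).sort (· ≤ ·)).getD (j - 1) 0

/-- The joint probability of the outcome `ω` under independence. -/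
noncomputable def weight (ω : Bool × Bool × Bool) : ℝ :=
  (if ω.1 then (0.05 : ℝ) else 0.95) * (if ω.2.1 then (0.025 : ℝ) else 0.975) *
    (if ω.2.2 then (0.025 : ℝ) else 0.975)

/-- The DBH (Heyse) procedure rejects at least one hypothesis at level `α = 0.05`:
`G (PV_(j)) ≤ j·α` for some `j`. -/
def rejectsSome (ω : Bool × Bool × Bool) : Prop :=
  ∃ j ∈ Finset.Icc 1 4, Gsum (sortedPV ω j) ≤ (j : ℝ) * 0.05

/-!
Under the complete null each of `PV₁, PV₂, PV₃` is either its small atom or `1`, and `G` takes the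
values `G(0.05) = 0.05`, `G(0.10) = 0.075`, `G(0.15) = 0.1` and `G(1) = 4`; the last exceeds every
critical value `j·α ≤ 0.2`. Hence DBH rejects exactly when `PV₁ = 0.05` (then `G(PV_(1)) = α`) or when
`PV₂ = 0.10` and `PV₃ = 0.15` (then `PV_(2) = 0.15` and `G(PV_(2)) = 2α`), while a lone `0.10` or
`0.15` has `G(PV_(1)) > α`. These events have probability `0.05 + 0.95 · 0.025² = 0.05059375`.
-/

lemma rejectsSome_iff (ω : Bool × Bool × Bool) :
    rejectsSome ω ↔ ω.1 = true ∨ (ω.2.1 = true ∧ ω.2.2 = true) := by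
  rw [rejectsSome, show Finset.Icc 1 4 = {1, 2, 3, 4} by rfl]
  -- `mergeSort` is well-founded recursion; as `insertionSort` the order statistics unfold by `simp`.
  rcases ω with ⟨_ | _, _ | _, _ | _⟩ <;>
    norm_num [sortedPV, List.mergeSort_eq_insertionSort, pvList, List.insertionSort,
      Gsum, F₁, F₂, F₃, F₄]

open Classical in
/-- Under the complete null, the probability that the Heyse DBH procedure at level
`α = 0.05` makes at least one rejection equals `0.05059375 > 0.05`. -/
theorem heyse_counterexample :
    (∑ ω : Bool × Bool × Bool, if rejectsSome ω then weight ω else 0) = 0.05059375 ∧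
      (0.05 : ℝ) < 0.05059375 := by
  refine ⟨?_, by norm_num⟩
  calc (∑ ω : Bool × Bool × Bool, if rejectsSome ω then weight ω else 0)
      = ∑ ω : Bool × Bool × Bool,
          if ω.1 = true ∨ (ω.2.1 = true ∧ ω.2.2 = true) then weight ω else 0 := by
        simp only [rejectsSome_iff]
    _ = 0.05 + 0.95 * 0.025 * 0.025 := by
        simp only [Fintype.sum_prod_type, Fintype.sum_bool, weight]
        norm_num
    _ = 0.05059375 := by norm_num
end

section
/- For the Heyse adjusted p-values p̃_(n) = p_(n), p̃_(i) = min(p̃_(i+1), G(p_(i))/i) (i = n-1,...,1), if G(x) ≤ n x (so that G(p_(n))/n ≤ p_(n)), then p̃_(i) ≥ min_{j=i,...,n} min(G(p_(j))/j, 1) for every i, i.e. the Heyse definition yields adjusted p-values at least as large as those from definition (5) with D = 1 (the Dudoit–van der Laan adjusted p-values). -/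
/-- The Heyse adjusted p-values `p̃ n = p n`, `p̃ i = min (p̃ (i+1)) (G (p i) / i)`
are at least as large as the Dudoit–van der Laan adjusted p-values
`min_{j ∈ [i,n]} min (G (p j) / j, 1)` (definition (5) with `D = 1`), provided
`G x ≤ n x` for all `x ∈ [0,1]` and the sorted p-values lie in `[0,1]`. -/
theorem heyse_ge_dudoit_vanderlaan (n : ℕ) (hn : 1 ≤ n)
    (G : ℝ → ℝ) (hGmono : MonotoneOn G (Set.Icc 0 1))
    (hGdom : ∀ x ∈ Set.Icc (0 : ℝ) 1, G x ≤ (n : ℝ) * x)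
    (p : ℕ → ℝ) (hp : MonotoneOn p (Set.Icc 1 n))
    (hp01 : ∀ i ∈ Finset.Icc 1 n, p i ∈ Set.Icc (0 : ℝ) 1)
    (padj : ℕ → ℝ)
    (hpadjn : padj n = p n)
    (hpadj : ∀ i ∈ Finset.Ico 1 n, padj i = min (padj (i + 1)) (G (p i) / (i : ℝ))) :
    ∀ i, ∀ hi : i ∈ Finset.Icc 1 n,
      (Finset.Icc i n).inf' (Finset.nonempty_Icc.mpr (Finset.mem_Icc.mp hi).2)
          (fun j => min (G (p j) / (j : ℝ)) 1) ≤ padj i := by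
  have hnpos : (0 : ℝ) < n := by positivity
  have hbase : min (G (p n) / (n : ℝ)) 1 ≤ p n := by
    have hpn : p n ∈ Set.Icc (0 : ℝ) 1 :=
      hp01 n (Finset.mem_Icc.mpr ⟨hn, le_refl n⟩)
    have h1 : G (p n) ≤ (n : ℝ) * p n := hGdom _ hpn
    have h2 : G (p n) / (n : ℝ) ≤ p n := by
      rw [div_le_iff₀ hnpos]
      linarith [h1]
    exact le_trans (min_le_left _ _) h2
  have key : ∀ d : ℕ, ∀ i : ℕ, 1 ≤ i → ∀ h : i + d = n,
      (Finset.Icc i n).inf' (Finset.nonempty_Icc.mpr (by omega))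
          (fun j => min (G (p j) / (j : ℝ)) 1) ≤ padj i := by
    intro d
    induction d with
    | zero =>
      intro i hi1 h
      have : i = n := by omega
      subst this
      rw [hpadjn]
      simpa using hbase
    | succ d ih =>
      intro i hi1 h
      have hin : i < n := by omega
      rw [hpadj i (Finset.mem_Ico.mpr ⟨hi1, hin⟩)]
      apply le_min
      · refine le_trans ?_ (ih (i + 1) (by omega) (by omega))
        apply Finset.le_inf'
        intro b hb
        exact Finset.inf'_le _ (by simp at hb ⊢; omega)
      · exact le_trans (Finset.inf'_le _ (Finset.mem_Icc.mpr ⟨le_refl i, by omega⟩))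
          (min_le_left _ _)
  intro i hi
  obtain ⟨hi1, hin⟩ := Finset.mem_Icc.mp hi
  exact key (n - i) i hi1 (by omega)
end
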